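/- Let $N, M$ be positive integers, let $Y$ and $\bar Y$ be $N\times N$ real symmetric positive definite matrices, and let $V$ and $\bar V$ be arbitrary $N\times M$ real matrices. Then $\log\det(I + VV^T Y^{-1}) \ge \log\det(I + \bar V\bar V^T \bar Y^{-1}) - \mathrm{Tr}\big(\bar V\bar V^T\bar Y^{-1}\big) + 2\,\mathrm{Tr}\big(\bar V^T\bar Y^{-1}V\big) - \mathrm{Tr}\Big(\big(\bar Y^{-1} - (\bar V\bar V^T + \bar Y)^{-1}\big)^T\,(VV^T + Y)\Big)$. -/

import Mathlib

/-!
Write `A = V Vᵀ + Y` and `P = 1 + Vᵀ Y⁻¹ V`, so that `det (1 + V Vᵀ Y⁻¹) = det P`. By the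
Woodbury identity `P⁻¹ = 1 - Vᵀ A⁻¹ V`, which is the minimum over all receivers `G` of the
mean-square-error matrix `E(G) = 1 - Gᵀ V - Vᵀ G + Gᵀ A G`, since
`E(G) - P⁻¹ = (G - A⁻¹ V)ᵀ A (G - A⁻¹ V) ≥ 0`. Concavity of `log det` at `P̄` gives
`log det P ≥ log det P̄ + M - tr (P̄ P⁻¹) ≥ log det P̄ + M - tr (P̄ E(Ḡ))` for the optimal receiver
`Ḡ = Ā⁻¹ V̄` of the barred data, and the right-hand side expands to the stated bound.
-/

open Matrix

namespace Matrix

section CommRing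

variable {m n R : Type*} [Fintype n] [DecidableEq m] [DecidableEq n] [CommRing R]

/-- The error covariance `(1 - Gᵀ V)(1 - Gᵀ V)ᵀ + Gᵀ Y G` of the linear receiver `G` for the
channel `V` under noise covariance `Y`, written in terms of `A = V Vᵀ + Y`. -/
def mseMatrix (V G : Matrix n m R) (A : Matrix n n R) : Matrix m m R :=
  1 - Gᵀ * V - Vᵀ * G + Gᵀ * A * G

theorem mseMatrix_eq_add {A : Matrix n n R} (hA : A.IsSymm) (hAdet : IsUnit A.det)
    (V G : Matrix n m R) :
    mseMatrix V G A = 1 - Vᵀ * A⁻¹ * V + (G - A⁻¹ * V)ᵀ * A * (G - A⁻¹ * V) := by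
  simp only [mseMatrix, transpose_sub, transpose_mul, hA.inv.eq, Matrix.sub_mul, Matrix.mul_sub,
    Matrix.mul_assoc, nonsing_inv_mul_cancel_left _ _ hAdet, mul_nonsing_inv_cancel_left _ _ hAdet]
  abel

theorem nonsing_inv_sub_nonsing_inv {A B : Matrix n n R} (hA : IsUnit A.det)
    (hB : IsUnit B.det) : B⁻¹ - A⁻¹ = A⁻¹ * (A - B) * B⁻¹ := by
  rw [Matrix.mul_sub, Matrix.sub_mul, nonsing_inv_mul _ hA, Matrix.one_mul,
    mul_nonsing_inv_cancel_right _ _ hB]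

variable [Fintype m] {Y : Matrix n n R}

theorem one_add_transpose_mul_inv_mul_push_through (hY : IsUnit Y.det) (V : Matrix n m R)
    (hA : IsUnit (V * Vᵀ + Y).det) :
    (1 + Vᵀ * Y⁻¹ * V) * (Vᵀ * (V * Vᵀ + Y)⁻¹) = Vᵀ * Y⁻¹ := by
  have : (1 + Vᵀ * Y⁻¹ * V) * Vᵀ = Vᵀ * Y⁻¹ * (V * Vᵀ + Y) := by
    rw [Matrix.add_mul, Matrix.one_mul, Matrix.mul_add, nonsing_inv_mul_cancel_right _ _ hY]
    simp only [Matrix.mul_assoc]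
    abel
  rw [← Matrix.mul_assoc, this, Matrix.mul_assoc, mul_nonsing_inv _ hA, Matrix.mul_one]

theorem inv_one_add_transpose_mul_inv_mul (hY : IsUnit Y.det) (V : Matrix n m R)
    (hA : IsUnit (V * Vᵀ + Y).det) :
    (1 + Vᵀ * Y⁻¹ * V)⁻¹ = 1 - Vᵀ * (V * Vᵀ + Y)⁻¹ * V := by
  refine inv_eq_right_inv ?_
  rw [Matrix.mul_sub, Matrix.mul_one, ← Matrix.mul_assoc,
    one_add_transpose_mul_inv_mul_push_through hY V hA, add_sub_cancel_right]

theorem trace_mul_mseMatrix (hY : Y.IsSymm) (hYdet : IsUnit Y.det) (V W : Matrix n m R)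
    (hA : IsUnit (V * Vᵀ + Y).det) (B : Matrix n n R) :
    ((1 + Vᵀ * Y⁻¹ * V) * mseMatrix W ((V * Vᵀ + Y)⁻¹ * V) B).trace =
      Fintype.card m + (V * Vᵀ * Y⁻¹).trace - 2 * (Vᵀ * Y⁻¹ * W).trace
        + ((Y⁻¹ - (V * Vᵀ + Y)⁻¹)ᵀ * B).trace := by
  set A := V * Vᵀ + Y
  set P := 1 + Vᵀ * Y⁻¹ * V
  set G := A⁻¹ * V
  have hAinv : (A⁻¹)ᵀ = A⁻¹ := by
    rw [transpose_nonsing_inv, transpose_add, transpose_mul, transpose_transpose, hY.eq]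
  have hP : Pᵀ = P := by
    simp only [P, transpose_add, transpose_one, transpose_mul, transpose_transpose, hY.inv.eq,
      Matrix.mul_assoc]
  have hPG : P * Gᵀ = Vᵀ * Y⁻¹ := by
    rw [transpose_mul, hAinv]
    exact one_add_transpose_mul_inv_mul_push_through hYdet V hA
  have hGPG : G * (P * Gᵀ) = Y⁻¹ - A⁻¹ := by
    rw [hPG, nonsing_inv_sub_nonsing_inv hA hYdet, add_sub_cancel_right]
    simp only [G, Matrix.mul_assoc]
  have htrP : P.trace = Fintype.card m + (V * Vᵀ * Y⁻¹).trace := by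
    rw [trace_add, trace_one, Matrix.mul_assoc, trace_mul_comm, Matrix.mul_assoc, trace_mul_comm]
  have htr₁ : (P * (Gᵀ * W)).trace = (Vᵀ * Y⁻¹ * W).trace := by
    rw [← Matrix.mul_assoc, hPG]
  have htr₂ : (P * (Wᵀ * G)).trace = (Vᵀ * Y⁻¹ * W).trace := by
    rw [← trace_transpose, transpose_mul, transpose_mul, transpose_transpose, hP,
      trace_mul_comm, ← Matrix.mul_assoc, hPG]
  have htr₃ : (P * (Gᵀ * B * G)).trace = ((Y⁻¹ - A⁻¹)ᵀ * B).trace := by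
    rw [transpose_sub, hY.inv.eq, hAinv, ← hGPG, Matrix.mul_assoc, ← Matrix.mul_assoc P,
      trace_mul_comm, Matrix.mul_assoc, trace_mul_comm]
  rw [mseMatrix, Matrix.mul_add, Matrix.mul_sub, Matrix.mul_sub, Matrix.mul_one, trace_add,
    trace_sub, trace_sub, htrP, htr₁, htr₂, htr₃]
  ring

end CommRing

variable {m n : Type*} [Fintype m] [Fintype n]

theorem PosDef.mul_transpose_self_add {Y : Matrix n n ℝ} (hY : Y.PosDef) (V : Matrix n m ℝ) :
    (V * Vᵀ + Y).PosDef := by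
  simpa using PosDef.posSemidef_add (posSemidef_self_mul_conjTranspose V) hY

variable [DecidableEq n]

open scoped ComplexOrder MatrixOrder in
theorem PosSemidef.trace_mul_nonneg {𝕜 : Type*} [RCLike 𝕜] {A B : Matrix n n 𝕜}
    (hA : A.PosSemidef) (hB : B.PosSemidef) : 0 ≤ (A * B).trace := by
  obtain ⟨C, rfl⟩ := CStarAlgebra.nonneg_iff_eq_star_mul_self.mp hB.nonneg
  rw [← Matrix.mul_assoc, trace_mul_comm, ← Matrix.mul_assoc]
  exact (hA.mul_mul_conjTranspose_same C).trace_nonneg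

theorem PosDef.log_det_le_trace_sub_card {C : Matrix n n ℝ} (hC : C.PosDef) :
    Real.log C.det ≤ C.trace - Fintype.card n := by
  rw [hC.isHermitian.det_eq_prod_eigenvalues, hC.isHermitian.trace_eq_sum_eigenvalues]
  simp only [RCLike.ofReal_real_eq_id, id_eq]
  rw [Real.log_prod fun i _ => (hC.eigenvalues_pos i).ne']
  have := Finset.sum_le_sum fun i (_ : i ∈ Finset.univ) =>
    Real.log_le_sub_one_of_pos (hC.eigenvalues_pos i)
  simpa [Finset.sum_sub_distrib] using this

open scoped MatrixOrder in
theorem PosDef.log_det_sub_log_det_le {W P : Matrix n n ℝ} (hW : W.PosDef) (hP : P.PosDef) :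
    Real.log W.det - Real.log P.det ≤ (W * P⁻¹).trace - Fintype.card n := by
  obtain ⟨B, hB, hPB⟩ := CStarAlgebra.isStrictlyPositive_iff_eq_star_mul_self.mp
    hP.inv.isStrictlyPositive
  have hC : (B * W * star B).PosDef := (IsUnit.posDef_star_right_conjugate_iff hB).mpr hW
  have hdet : (B * W * star B).det = W.det * P.det⁻¹ := by
    rw [det_mul, det_mul, mul_comm B.det, mul_assoc, ← det_mul, det_mul_comm, ← hPB,
      det_nonsing_inv, Ring.inverse_eq_inv']
  have htr : (B * W * star B).trace = (W * P⁻¹).trace := by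
    rw [hPB, trace_mul_cycle, trace_mul_comm]
  have := hC.log_det_le_trace_sub_card
  rwa [hdet, htr, Real.log_mul hW.det_pos.ne' (inv_pos.mpr hP.det_pos).ne', Real.log_inv,
    ← sub_eq_add_neg] at this

variable [DecidableEq m]

theorem PosDef.one_add_transpose_mul_inv_mul {Y : Matrix n n ℝ} (hY : Y.PosDef)
    (V : Matrix n m ℝ) : (1 + Vᵀ * Y⁻¹ * V).PosDef := by
  simpa using PosDef.one.add_posSemidef (hY.inv.posSemidef.conjTranspose_mul_mul_same V)

theorem trace_mul_inv_le_trace_mul_mseMatrix {Y : Matrix n n ℝ} (hY : Y.PosDef)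
    {W : Matrix m m ℝ} (hW : W.PosSemidef) (V G : Matrix n m ℝ) :
    (W * (1 + Vᵀ * Y⁻¹ * V)⁻¹).trace ≤ (W * mseMatrix V G (V * Vᵀ + Y)).trace := by
  have hA := hY.mul_transpose_self_add V
  have hAdet : IsUnit (V * Vᵀ + Y).det := hA.det_pos.ne'.isUnit
  rw [inv_one_add_transpose_mul_inv_mul hY.det_pos.ne'.isUnit V hAdet,
    mseMatrix_eq_add (isHermitian_iff_isSymm.mp hA.isHermitian) hAdet, Matrix.mul_add, trace_add]
  refine le_add_of_nonneg_right (hW.trace_mul_nonneg ?_)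
  simpa using hA.posSemidef.conjTranspose_mul_mul_same (G - (V * Vᵀ + Y)⁻¹ * V)

end Matrix

theorem logdet_lower_bound_real_general {N M : ℕ}
    (Y Ybar : Matrix (Fin N) (Fin N) ℝ) (V Vbar : Matrix (Fin N) (Fin M) ℝ)
    (hY : Y.PosDef) (hYbar : Ybar.PosDef) :
    Real.log (1 + V * Vᵀ * Y⁻¹).det ≥
      Real.log (1 + Vbar * Vbarᵀ * Ybar⁻¹).det
        - (Vbar * Vbarᵀ * Ybar⁻¹).trace
        + 2 * (Vbarᵀ * Ybar⁻¹ * V).trace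
        - ((Ybar⁻¹ - (Vbar * Vbarᵀ + Ybar)⁻¹)ᵀ * (V * Vᵀ + Y)).trace := by
  have hP := hY.one_add_transpose_mul_inv_mul V
  have hPbar := hYbar.one_add_transpose_mul_inv_mul Vbar
  have hconcave := hPbar.log_det_sub_log_det_le hP
  have hmse := trace_mul_inv_le_trace_mul_mseMatrix hY hPbar.posSemidef V
    ((Vbar * Vbarᵀ + Ybar)⁻¹ * Vbar)
  have htrace := trace_mul_mseMatrix (isHermitian_iff_isSymm.mp hYbar.isHermitian)
    hYbar.det_pos.ne'.isUnit Vbar V (hYbar.mul_transpose_self_add Vbar).det_pos.ne'.isUnit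
    (V * Vᵀ + Y)
  have hdet (U : Matrix (Fin N) (Fin M) ℝ) (Z : Matrix (Fin N) (Fin N) ℝ) :
      (1 + U * Uᵀ * Z⁻¹).det = (1 + Uᵀ * Z⁻¹ * U).det := by
    rw [Matrix.mul_assoc, det_one_add_mul_comm]
  rw [ge_iff_le, hdet, hdet]
  linarith

/-- Real-matrix specialization of Lemma 2 of the paper:
lower bound on `log det (I + V Vᵀ Y⁻¹)`. -/
theorem logdet_lower_bound_real {N M : ℕ} (hN : 0 < N) (hM : 0 < M)
    (Y Ybar : Matrix (Fin N) (Fin N) ℝ) (V Vbar : Matrix (Fin N) (Fin M) ℝ)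
    (hY : Y.PosDef) (hYbar : Ybar.PosDef) :
    Real.log (1 + V * Vᵀ * Y⁻¹).det ≥
      Real.log (1 + Vbar * Vbarᵀ * Ybar⁻¹).det
        - (Vbar * Vbarᵀ * Ybar⁻¹).trace
        + 2 * (Vbarᵀ * Ybar⁻¹ * V).trace
        - ((Ybar⁻¹ - (Vbar * Vbarᵀ + Ybar)⁻¹)ᵀ * (V * Vᵀ + Y)).trace :=
  logdet_lower_bound_real_general Y Ybar V Vbar hY hYbar
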